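/- Let H₁, H₂ be separable complex Hilbert spaces, H = H₁ ⊗ H₂, and (X, μ) = (X₁ × X₂, μ₁ ⊗ μ₂) the product of measure spaces with σ-finite positive measures. If F = F₁ ⊗ F₂ : X → H is a continuous frame for H with respect to (X, μ) with frame bounds A and B, then F₁ is a continuous frame for H₁ with respect to (X₁, μ₁) with frame bounds A₁ = A / C_{F₂} and B₁ = B / D_{F₂}, where C_{F₂} = inf_{‖g‖_{H₂}=1} ∫_{X₂} |⟨g, F₂(x₂)⟩|² dμ₂(x₂) and D_{F₂} = sup_{‖g‖_{H₂}=1} ∫_{X₂} |⟨g, F₂(x₂)⟩|² dμ₂(x₂); and F₂ is a continuous frame for H₂ with respect to (X₂, μ₂) with frame bounds A₂ = A / C_{F₁} and B₂ = B / D_{F₁}, where C_{F₁} = inf_{‖f‖_{H₁}=1} ∫_{X₁} |⟨f, F₁(x₁)⟩|² dμ₁(x₁) and D_{F₁} = sup_{‖f‖_{H₁}=1} ∫_{X₁} |⟨f, F₁(x₁)⟩|² dμ₁(x₁). -/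

import Mathlib

/-!
For simple tensors the frame integral of `F₁ ⊗ F₂` factorises by Tonelli,
`∫ |⟨f ⊗ g, F₁ ⊗ F₂⟩|² = (∫ |⟨f, F₁⟩|²) (∫ |⟨g, F₂⟩|²)`, and `‖f ⊗ g‖ = ‖f‖ ‖g‖`. So for a unit
vector `g` the frame inequality of `F₁ ⊗ F₂` at `f ⊗ g` reads `A ‖f‖² ≤ I₁(f) I₂(g) ≤ B ‖f‖²`, where
`Iₖ` is the frame integral of `Fₖ`, and taking the infimum resp. supremum over `g` gives the bounds `A / C_{F₂}` and `B / D_{F₂}`.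

Weak measurability of `F₁` is read off the section `x₁ ↦ ⟨f, F₁ x₁⟩ ⟨g, F₂ x₂⟩` at a point `x₂`
with `⟨g, F₂ x₂⟩ ≠ 0`; such points exist because `F₂` cannot be a.e. orthogonal to `g ≠ 0`
without violating the lower frame bound at `f ⊗ g`. The statement for `F₂` is the one for `F₁`
after swapping the factors.
-/

open MeasureTheory ENNReal

noncomputable section

namespace ContFrame

variable {X : Type*} {H : Type*}

/-- The paper's inner product `⟨f, g⟩`: linear in the first argument and
conjugate-linear in the second (Mathlib's `inner` is conjugate-linear in the first). -/
def pinner [NormedAddCommGroup H] [InnerProductSpace ℂ H] (f g : H) : ℂ :=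
  @inner ℂ _ _ g f

/-- `∫_X |⟨f, F x⟩|² dμ(x)`, as a lower integral. -/
def frameInt [MeasurableSpace X] [NormedAddCommGroup H] [InnerProductSpace ℂ H]
    (μ : Measure X) (F : X → H) (f : H) : ℝ≥0∞ :=
  ∫⁻ x, (‖pinner f (F x)‖₊ : ℝ≥0∞) ^ 2 ∂μ

/-- `F` is weakly measurable: `x ↦ ⟨f, F x⟩` is μ-measurable for every `f`. -/
def WeaklyMeasurable [MeasurableSpace X] [NormedAddCommGroup H] [InnerProductSpace ℂ H]
    (μ : Measure X) (F : X → H) : Prop :=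
  ∀ f : H, AEMeasurable (fun x => pinner f (F x)) μ

/-- `F` is a Bessel mapping for `H` w.r.t. `(X, μ)` with Bessel bound `B < ∞`. -/
def IsBesselMapping [MeasurableSpace X] [NormedAddCommGroup H] [InnerProductSpace ℂ H]
    (μ : Measure X) (F : X → H) (B : ℝ≥0∞) : Prop :=
  B < ⊤ ∧ WeaklyMeasurable μ F ∧
    ∀ f : H, frameInt μ F f ≤ B * (‖f‖₊ : ℝ≥0∞) ^ 2

/-- `F` is a continuous frame for `H` w.r.t. `(X, μ)` with frame bounds `0 < A ≤ B < ∞`: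
`A ‖f‖² ≤ ∫_X |⟨f, F x⟩|² dμ(x) ≤ B ‖f‖²` for all `f ∈ H`. -/
def IsContinuousFrame [MeasurableSpace X] [NormedAddCommGroup H] [InnerProductSpace ℂ H]
    (μ : Measure X) (F : X → H) (A B : ℝ≥0∞) : Prop :=
  0 < A ∧ A ≤ B ∧ B < ⊤ ∧ WeaklyMeasurable μ F ∧
    ∀ f : H, A * (‖f‖₊ : ℝ≥0∞) ^ 2 ≤ frameInt μ F f ∧
      frameInt μ F f ≤ B * (‖f‖₊ : ℝ≥0∞) ^ 2

/-- A realization of the Hilbert tensor product `H = H₁ ⊗ H₂`: a bilinear map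
`tmul` whose simple tensors satisfy `⟪a⊗b, c⊗d⟫ = ⟪a,c⟫⟪b,d⟫` and span a dense subspace. -/
structure HilbertTensorProduct (H₁ H₂ H : Type*)
    [NormedAddCommGroup H₁] [InnerProductSpace ℂ H₁]
    [NormedAddCommGroup H₂] [InnerProductSpace ℂ H₂]
    [NormedAddCommGroup H] [InnerProductSpace ℂ H] where
  tmul : H₁ →ₗ[ℂ] H₂ →ₗ[ℂ] H
  inner_tmul : ∀ (a c : H₁) (b d : H₂),
    (inner ℂ (tmul a b) (tmul c d) : ℂ) = (inner ℂ a c : ℂ) * (inner ℂ b d : ℂ)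
  dense_span : Dense (↑(Submodule.span ℂ {z : H | ∃ a b, z = tmul a b}) : Set H)

theorem coe_nnnorm_eq_one {E : Type*} [NormedAddCommGroup E] {x : E} (hx : ‖x‖ = 1) :
    (‖x‖₊ : ℝ≥0∞) = 1 := by
  rw [ENNReal.coe_eq_one]
  exact NNReal.eq hx

theorem ne_zero_and_ne_top_of_le_mul_le {a b A B : ℝ≥0∞} (hA : A ≠ 0) (hB : B ≠ ⊤)
    (hlo : A ≤ a * b) (hhi : a * b ≤ B) : a ≠ 0 ∧ a ≠ ⊤ := by
  have hab : a * b ≠ 0 := ((pos_iff_ne_zero.2 hA).trans_le hlo).ne'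
  refine ⟨left_ne_zero_of_mul hab, fun ha => ?_⟩
  rw [ha, ENNReal.top_mul (right_ne_zero_of_mul hab), top_le_iff] at hhi
  exact hB hhi

namespace HilbertTensorProduct

variable {H₁ H₂ H : Type*} [NormedAddCommGroup H₁] [InnerProductSpace ℂ H₁]
  [NormedAddCommGroup H₂] [InnerProductSpace ℂ H₂] [NormedAddCommGroup H] [InnerProductSpace ℂ H]
  (tp : HilbertTensorProduct H₁ H₂ H)

theorem pinner_tmul (f a : H₁) (g b : H₂) :
    pinner (tp.tmul f g) (tp.tmul a b) = pinner f a * pinner g b :=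
  tp.inner_tmul a f b g

theorem norm_tmul (a : H₁) (b : H₂) : ‖tp.tmul a b‖ = ‖a‖ * ‖b‖ := by
  have h := tp.inner_tmul a a b b
  simp only [inner_self_eq_norm_sq_to_K] at h
  have hsq : ‖tp.tmul a b‖ ^ 2 = (‖a‖ * ‖b‖) ^ 2 := by
    rw [mul_pow]
    exact_mod_cast h
  exact (pow_left_inj₀ (norm_nonneg _) (by positivity) two_ne_zero).1 hsq

theorem coe_nnnorm_tmul (a : H₁) (b : H₂) :
    (‖tp.tmul a b‖₊ : ℝ≥0∞) = ‖a‖₊ * ‖b‖₊ := by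
  rw [← ENNReal.coe_mul, ENNReal.coe_inj]
  exact NNReal.eq (tp.norm_tmul a b)

theorem tmul_ne_zero {a : H₁} {b : H₂} (ha : a ≠ 0) (hb : b ≠ 0) : tp.tmul a b ≠ 0 := by
  rw [← norm_ne_zero_iff, tp.norm_tmul]
  exact mul_ne_zero (norm_ne_zero_iff.2 ha) (norm_ne_zero_iff.2 hb)

def flip : HilbertTensorProduct H₂ H₁ H where
  tmul := tp.tmul.flip
  inner_tmul a c b d := by
    simp only [LinearMap.flip_apply, tp.inner_tmul, mul_comm]
  dense_span := by
    have hsimple : {z : H | ∃ a b, z = tp.tmul.flip a b} = {z : H | ∃ a b, z = tp.tmul a b} := by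
      ext z
      exact ⟨fun ⟨b, a, hz⟩ => ⟨a, b, hz⟩, fun ⟨a, b, hz⟩ => ⟨b, a, hz⟩⟩
    rw [hsimple]
    exact tp.dense_span

def tensorMap {X₁ X₂ : Type*} (F₁ : X₁ → H₁) (F₂ : X₂ → H₂) (x : X₁ × X₂) : H :=
  tp.tmul (F₁ x.1) (F₂ x.2)

theorem pinner_tmul_tensorMap {X₁ X₂ : Type*} (F₁ : X₁ → H₁) (F₂ : X₂ → H₂) (f : H₁) (g : H₂)
    (x : X₁ × X₂) :
    pinner (tp.tmul f g) (tp.tensorMap F₁ F₂ x) = pinner f (F₁ x.1) * pinner g (F₂ x.2) :=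
  tp.pinner_tmul _ _ _ _

end HilbertTensorProduct

section Frame

variable [MeasurableSpace X] [NormedAddCommGroup H] [InnerProductSpace ℂ H]
  {μ : Measure X} {F : X → H} {A B : ℝ≥0∞}

def frameInf (μ : Measure X) (F : X → H) : ℝ≥0∞ :=
  ⨅ (g : H) (_ : ‖g‖ = 1), frameInt μ F g

def frameSup (μ : Measure X) (F : X → H) : ℝ≥0∞ :=
  ⨆ (g : H) (_ : ‖g‖ = 1), frameInt μ F g

theorem frameInf_le_frameInt {g : H} (hg : ‖g‖ = 1) : frameInf μ F ≤ frameInt μ F g :=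
  iInf₂_le g hg

theorem frameInt_le_frameSup {g : H} (hg : ‖g‖ = 1) : frameInt μ F g ≤ frameSup μ F :=
  le_iSup₂ (f := fun (g : H) (_ : ‖g‖ = 1) => frameInt μ F g) g hg

theorem IsContinuousFrame.not_ae_pinner_eq_zero (hF : IsContinuousFrame μ F A B) {f : H}
    (hf : f ≠ 0) : ¬ ∀ᵐ x ∂μ, pinner f (F x) = 0 := by
  intro hzero
  have hint : frameInt μ F f = 0 := by
    have hae : (fun x => (‖pinner f (F x)‖₊ : ℝ≥0∞) ^ 2) =ᵐ[μ] 0 :=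
      hzero.mono fun x hx => by simp [hx]
    rw [frameInt, lintegral_congr_ae hae, Pi.zero_def, lintegral_zero]
  have hlow := (hF.2.2.2.2 f).1
  rw [hint, nonpos_iff_eq_zero] at hlow
  exact mul_ne_zero hF.1.ne' (pow_ne_zero 2 (by simpa using hf)) hlow

theorem IsContinuousFrame.comp_measurePreserving {Y : Type*} [MeasurableSpace Y]
    {ν : Measure Y} {e : Y → X} (he : MeasurePreserving e ν μ) (he' : MeasurableEmbedding e)
    (hF : IsContinuousFrame μ F A B) : IsContinuousFrame ν (F ∘ e) A B := by
  obtain ⟨hA, hAB, hB, hW, hbd⟩ := hF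
  refine ⟨hA, hAB, hB, fun f => (hW f).comp_quasiMeasurePreserving he.quasiMeasurePreserving,
    fun f => ?_⟩
  have hint : frameInt ν (F ∘ e) f = frameInt μ F f := 
    he.lintegral_comp_emb he' fun x => (‖pinner f (F x)‖₊ : ℝ≥0∞) ^ 2
  rw [hint]
  exact hbd f

end Frame

section ProductMeasurability

variable {X₁ X₂ : Type*} [MeasurableSpace X₁] [MeasurableSpace X₂]
  {μ₁ : Measure X₁} {μ₂ : Measure X₂} {φ : X₁ → ℂ} {ψ : X₂ → ℂ}

theorem aemeasurable_of_aemeasurable_mul_right [SFinite μ₁] [SFinite μ₂]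
    (h : AEMeasurable (fun x : X₁ × X₂ => φ x.1 * ψ x.2) (μ₁.prod μ₂))
    (hψ : ¬ ∀ᵐ y ∂μ₂, ψ y = 0) : AEMeasurable φ μ₁ := by
  obtain ⟨y, hψy, hsection⟩ :=
    ((Filter.not_eventually.1 hψ).and_eventually h.aestronglyMeasurable.prodMk_right).exists
  simpa only [mul_assoc, mul_inv_cancel₀ hψy, mul_one] using
    hsection.aemeasurable.mul_const (ψ y)⁻¹

end ProductMeasurability

section ProductBounds

variable {X₁ X₂ H₁ H₂ : Type*} [MeasurableSpace X₁] [MeasurableSpace X₂]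
  [NormedAddCommGroup H₁] [InnerProductSpace ℂ H₁] [NormedAddCommGroup H₂] [InnerProductSpace ℂ H₂]
  {μ₁ : Measure X₁} {μ₂ : Measure X₂} {F₁ : X₁ → H₁} {F₂ : X₂ → H₂} {A B : ℝ≥0∞}
  (hA : A ≠ 0) (hB : B ≠ ⊤)
  (hlow : ∀ (f : H₁) (g : H₂), ‖g‖ = 1 →
    A * (‖f‖₊ : ℝ≥0∞) ^ 2 ≤ frameInt μ₁ F₁ f * frameInt μ₂ F₂ g)
  (hup : ∀ (f : H₁) (g : H₂), ‖g‖ = 1 →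
    frameInt μ₁ F₁ f * frameInt μ₂ F₂ g ≤ B * (‖f‖₊ : ℝ≥0∞) ^ 2)
include hA hB hlow hup

theorem frameInt_ne_zero_ne_top_of_norm_eq_one {f : H₁} {g : H₂} (hf : ‖f‖ = 1)
    (hg : ‖g‖ = 1) :
    (frameInt μ₁ F₁ f ≠ 0 ∧ frameInt μ₁ F₁ f ≠ ⊤) ∧
      (frameInt μ₂ F₂ g ≠ 0 ∧ frameInt μ₂ F₂ g ≠ ⊤) := by
  have hlo := hlow f g hg
  have hhi := hup f g hg
  rw [coe_nnnorm_eq_one hf, one_pow, mul_one] at hlo hhi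
  exact ⟨ne_zero_and_ne_top_of_le_mul_le hA hB hlo hhi,
    ne_zero_and_ne_top_of_le_mul_le hA hB (hlo.trans_eq (mul_comm _ _))
      ((mul_comm _ _).trans_le hhi)⟩

theorem frameInf_ne_zero [Nontrivial H₁] [Nontrivial H₂] : frameInf μ₂ F₂ ≠ 0 := by
  obtain ⟨f₀, hf₀⟩ := exists_norm_eq H₁ zero_le_one
  obtain ⟨g₀, hg₀⟩ := exists_norm_eq H₂ zero_le_one
  have hI₁ := (frameInt_ne_zero_ne_top_of_norm_eq_one hA hB hlow hup hf₀ hg₀).1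
  have hbound : A / frameInt μ₁ F₁ f₀ ≤ frameInf μ₂ F₂ := by
    refine le_iInf₂ fun g hg => ENNReal.div_le_of_le_mul ?_
    simpa [coe_nnnorm_eq_one hf₀, mul_comm] using hlow f₀ g hg
  exact ((ENNReal.div_pos hA hI₁.2).trans_le hbound).ne'

theorem frameInf_ne_top [Nontrivial H₁] [Nontrivial H₂] : frameInf μ₂ F₂ ≠ ⊤ := by
  obtain ⟨f₀, hf₀⟩ := exists_norm_eq H₁ zero_le_one
  obtain ⟨g₀, hg₀⟩ := exists_norm_eq H₂ zero_le_one
  have hI₂ := (frameInt_ne_zero_ne_top_of_norm_eq_one hA hB hlow hup hf₀ hg₀).2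
  exact ne_top_of_le_ne_top hI₂.2 (frameInf_le_frameInt hg₀)

theorem frameSup_ne_zero [Nontrivial H₁] [Nontrivial H₂] : frameSup μ₂ F₂ ≠ 0 := by
  obtain ⟨f₀, hf₀⟩ := exists_norm_eq H₁ zero_le_one
  obtain ⟨g₀, hg₀⟩ := exists_norm_eq H₂ zero_le_one
  have hI₂ := (frameInt_ne_zero_ne_top_of_norm_eq_one hA hB hlow hup hf₀ hg₀).2
  exact ((pos_iff_ne_zero.2 hI₂.1).trans_le (frameInt_le_frameSup hg₀)).ne'

theorem frameSup_ne_top [Nontrivial H₁] [Nontrivial H₂] : frameSup μ₂ F₂ ≠ ⊤ := by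
  obtain ⟨f₀, hf₀⟩ := exists_norm_eq H₁ zero_le_one
  obtain ⟨g₀, hg₀⟩ := exists_norm_eq H₂ zero_le_one
  have hI₁ := (frameInt_ne_zero_ne_top_of_norm_eq_one hA hB hlow hup hf₀ hg₀).1
  have hbound : frameSup μ₂ F₂ ≤ B / frameInt μ₁ F₁ f₀ := by
    refine iSup₂_le fun g hg => (ENNReal.le_div_iff_mul_le (Or.inl hI₁.1) (Or.inr hB)).2 ?_
    simpa [coe_nnnorm_eq_one hf₀, mul_comm] using hup f₀ g hg
  exact ne_top_of_le_ne_top (ENNReal.div_ne_top hB hI₁.1) hbound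

theorem div_frameInf_mul_le [Nontrivial H₁] [Nontrivial H₂] (f : H₁) :
    A / frameInf μ₂ F₂ * (‖f‖₊ : ℝ≥0∞) ^ 2 ≤ frameInt μ₁ F₁ f := by
  have hC₀ := frameInf_ne_zero hA hB hlow hup
  have hC := frameInf_ne_top hA hB hlow hup
  have hmul : A * (‖f‖₊ : ℝ≥0∞) ^ 2 ≤ frameInf μ₂ F₂ * frameInt μ₁ F₁ f := by
    rw [← ENNReal.div_le_iff_le_mul (Or.inr hC) (Or.inr hC₀)]
    exact le_iInf₂ fun g hg => ENNReal.div_le_of_le_mul ((hlow f g hg).trans_eq (mul_comm _ _))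
  rw [← ENNReal.mul_div_right_comm, ENNReal.div_le_iff_le_mul (Or.inl hC₀) (Or.inl hC)]
  exact hmul.trans_eq (mul_comm _ _)

theorem le_div_frameSup_mul [Nontrivial H₁] [Nontrivial H₂] (f : H₁) :
    frameInt μ₁ F₁ f ≤ B / frameSup μ₂ F₂ * (‖f‖₊ : ℝ≥0∞) ^ 2 := by
  have hmul : frameInt μ₁ F₁ f * frameSup μ₂ F₂ ≤ B * (‖f‖₊ : ℝ≥0∞) ^ 2 := by
    simp only [frameSup, ENNReal.mul_iSup]
    exact iSup₂_le fun g hg => hup f g hg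
  rw [← ENNReal.mul_div_right_comm, ENNReal.le_div_iff_mul_le
    (Or.inl (frameSup_ne_zero hA hB hlow hup)) (Or.inl (frameSup_ne_top hA hB hlow hup))]
  exact hmul

theorem isContinuousFrame_of_frameInt_mul_bounds [Nontrivial H₁] [Nontrivial H₂]
    (hW : WeaklyMeasurable μ₁ F₁) :
    IsContinuousFrame μ₁ F₁ (A / frameInf μ₂ F₂) (B / frameSup μ₂ F₂) := by
  have hbounds (f : H₁) :=
    And.intro (div_frameInf_mul_le hA hB hlow hup f) (le_div_frameSup_mul hA hB hlow hup f)
  obtain ⟨f₀, hf₀⟩ := exists_norm_eq H₁ zero_le_one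
  refine ⟨ENNReal.div_pos hA (frameInf_ne_top hA hB hlow hup), ?_,
    ENNReal.div_lt_top hB (frameSup_ne_zero hA hB hlow hup), hW, hbounds⟩
  simpa [coe_nnnorm_eq_one hf₀] using (hbounds f₀).1.trans (hbounds f₀).2

end ProductBounds

section TensorFrame

open HilbertTensorProduct

variable {X₁ X₂ H₁ H₂ H : Type*} [MeasurableSpace X₁] [MeasurableSpace X₂]
  [NormedAddCommGroup H₁] [InnerProductSpace ℂ H₁] [NormedAddCommGroup H₂] [InnerProductSpace ℂ H₂]
  [NormedAddCommGroup H] [InnerProductSpace ℂ H]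
  {μ₁ : Measure X₁} {μ₂ : Measure X₂} {A B : ℝ≥0∞}
  (tp : HilbertTensorProduct H₁ H₂ H) {F₁ : X₁ → H₁} {F₂ : X₂ → H₂}

theorem frameInt_tensorMap_tmul [SFinite μ₂] (h₁ : WeaklyMeasurable μ₁ F₁)
    (h₂ : WeaklyMeasurable μ₂ F₂) (f : H₁) (g : H₂) :
    frameInt (μ₁.prod μ₂) (tp.tensorMap F₁ F₂) (tp.tmul f g)
      = frameInt μ₁ F₁ f * frameInt μ₂ F₂ g := by
  simp only [frameInt, pinner_tmul_tensorMap, nnnorm_mul, ENNReal.coe_mul, mul_pow]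
  exact lintegral_prod_mul ((h₁ f).enorm.pow_const 2) ((h₂ g).enorm.pow_const 2)

theorem IsContinuousFrame.tensorMap_swap [SFinite μ₁] [SFinite μ₂]
    (hF : IsContinuousFrame (μ₁.prod μ₂) (tp.tensorMap F₁ F₂) A B) :
    IsContinuousFrame (μ₂.prod μ₁) (tp.flip.tensorMap F₂ F₁) A B :=
  hF.comp_measurePreserving Measure.measurePreserving_swap
    MeasurableEquiv.prodComm.measurableEmbedding

theorem IsContinuousFrame.not_ae_pinner_right_eq_zero [Nontrivial H₁]
    (hF : IsContinuousFrame (μ₁.prod μ₂) (tp.tensorMap F₁ F₂) A B) {g : H₂} (hg : g ≠ 0) :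
    ¬ ∀ᵐ y ∂μ₂, pinner g (F₂ y) = 0 := by
  obtain ⟨f, hf⟩ := exists_ne (0 : H₁)
  refine fun hzero => hF.not_ae_pinner_eq_zero (tp.tmul_ne_zero hf hg) ?_
  filter_upwards [Measure.quasiMeasurePreserving_snd.ae hzero] with x hx
  rw [pinner_tmul_tensorMap, hx, mul_zero]

theorem IsContinuousFrame.weaklyMeasurable_left [SFinite μ₁] [SFinite μ₂]
    [Nontrivial H₁] [Nontrivial H₂]
    (hF : IsContinuousFrame (μ₁.prod μ₂) (tp.tensorMap F₁ F₂) A B) : WeaklyMeasurable μ₁ F₁ := by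
  obtain ⟨g, hg⟩ := exists_ne (0 : H₂)
  intro f
  refine aemeasurable_of_aemeasurable_mul_right ?_ (hF.not_ae_pinner_right_eq_zero tp hg)
  simpa only [pinner_tmul_tensorMap] using hF.2.2.2.1 (tp.tmul f g)

theorem IsContinuousFrame.tensorMap_left [SFinite μ₁] [SFinite μ₂]
    [Nontrivial H₁] [Nontrivial H₂]
    (hF : IsContinuousFrame (μ₁.prod μ₂) (tp.tensorMap F₁ F₂) A B) :
    IsContinuousFrame μ₁ F₁ (A / frameInf μ₂ F₂) (B / frameSup μ₂ F₂) := by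
  have h₁ := hF.weaklyMeasurable_left tp
  have h₂ := hF.tensorMap_swap.weaklyMeasurable_left tp.flip
  have hbounds (f : H₁) (g : H₂) (hg : ‖g‖ = 1) :
      A * (‖f‖₊ : ℝ≥0∞) ^ 2 ≤ frameInt μ₁ F₁ f * frameInt μ₂ F₂ g ∧
        frameInt μ₁ F₁ f * frameInt μ₂ F₂ g ≤ B * (‖f‖₊ : ℝ≥0∞) ^ 2 := by
    simpa only [frameInt_tensorMap_tmul tp h₁ h₂, coe_nnnorm_tmul, coe_nnnorm_eq_one hg, mul_one,
      one_pow] using hF.2.2.2.2 (tp.tmul f g)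
  exact isContinuousFrame_of_frameInt_mul_bounds hF.1.ne' hF.2.2.1.ne
    (fun f g hg => (hbounds f g hg).1) (fun f g hg => (hbounds f g hg).2) h₁

end TensorFrame

theorem tensor_frame_yields_component_frames
    {X₁ X₂ : Type*} [MeasurableSpace X₁] [MeasurableSpace X₂]
    {H₁ H₂ H : Type*}
    [NormedAddCommGroup H₁] [InnerProductSpace ℂ H₁] [Nontrivial H₁]
    [NormedAddCommGroup H₂] [InnerProductSpace ℂ H₂] [Nontrivial H₂]
    [NormedAddCommGroup H] [InnerProductSpace ℂ H]
    (μ₁ : Measure X₁) (μ₂ : Measure X₂) [SigmaFinite μ₁] [SigmaFinite μ₂]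
    (tp : HilbertTensorProduct H₁ H₂ H)
    (F₁ : X₁ → H₁) (F₂ : X₂ → H₂) (A B : ℝ≥0∞)
    (hF : IsContinuousFrame (μ₁.prod μ₂)
      (fun x : X₁ × X₂ => tp.tmul (F₁ x.1) (F₂ x.2)) A B) :
    IsContinuousFrame μ₁ F₁
        (A / ⨅ (g : H₂) (_ : ‖g‖ = 1), frameInt μ₂ F₂ g)
        (B / ⨆ (g : H₂) (_ : ‖g‖ = 1), frameInt μ₂ F₂ g) ∧
      IsContinuousFrame μ₂ F₂
        (A / ⨅ (f : H₁) (_ : ‖f‖ = 1), frameInt μ₁ F₁ f)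
        (B / ⨆ (f : H₁) (_ : ‖f‖ = 1), frameInt μ₁ F₁ f) :=
  ⟨hF.tensorMap_left tp, hF.tensorMap_swap.tensorMap_left tp.flip⟩

end ContFrame
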